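/- In surreplacement sampling with parameter d from N initially distinct labels, the sequence ξ(1), ξ(2), ..., ξ(N) of labels in order of first appearance is uniformly distributed over all permutations of {1,...,N}. -/

import Mathlib

open MeasureTheory Finset ENNReal

/-- `firstDistinct g i` is the `i`-th distinct value appearing in the sequence `g`. -/
noncomputable def firstDistinct (g : ℕ → ℕ) (i : ℕ) : ℕ :=
  g (Nat.nth (fun j => ∀ k < j, g k ≠ g j) i)

/-- The probability that the first `m` steps of surreplacement sampling with parameter `d`
from `N` initially distinct labels yield the label sequence `w`: step `i` yields label `j`
with conditional probability `(1 + k(d-1))/(N + i(d-1))` where `k` is the number of earlier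
draws of `j`. -/
noncomputable def surWeight (N d m : ℕ) (w : Fin m → Fin N) : ℝ :=
  ∏ i : Fin m,
    (1 + ((Finset.univ.filter (fun j : Fin m => j < i ∧ w j = w i)).card : ℝ)
        * ((d : ℝ) - 1)) / ((N : ℝ) + (i : ℕ) * ((d : ℝ) - 1))

variable {N d : ℕ}

lemma surWeight_nonneg (hN : 0 < N) (hd : 1 ≤ d) {m : ℕ} (w : Fin m → Fin N) :
    0 ≤ surWeight N d m w := by
  apply Finset.prod_nonneg
  intro i _
  have he : (0:ℝ) ≤ (d:ℝ) - 1 := by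
    have : (1:ℝ) ≤ d := by exact_mod_cast hd
    linarith
  have hden : (0:ℝ) < (N:ℝ) + (i:ℕ) * ((d:ℝ) - 1) := by
    have : (1:ℝ) ≤ (N:ℝ) := by exact_mod_cast hN
    positivity
  apply div_nonneg _ hden.le
  positivity

lemma surWeight_relabel {m : ℕ} (σ : Equiv.Perm (Fin N)) (w : Fin m → Fin N) :
    surWeight N d m (fun i => σ (w i)) = surWeight N d m w := by
  unfold surWeight
  apply Finset.prod_congr rfl
  intro i _
  have h : (Finset.univ.filter (fun j : Fin m => j < i ∧ σ (w j) = σ (w i))) =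
      (Finset.univ.filter (fun j : Fin m => j < i ∧ w j = w i)) := by
    apply Finset.filter_congr
    intro j _
    simp [σ.injective.eq_iff]
  simp only [← h]

lemma filter_eq_image_castSucc {m : ℕ} (P : Fin (m+1) → Prop) [DecidablePred P]
    (h : ∀ j, P j → (j:ℕ) < m) :
    Finset.univ.filter P
      = (Finset.univ.filter (fun j : Fin m => P j.castSucc)).image Fin.castSucc := by
  ext j
  simp only [Finset.mem_filter, Finset.mem_univ, true_and, Finset.mem_image]
  constructor
  · intro hj
    have hj' : Fin.castSucc (⟨(j:ℕ), h j hj⟩ : Fin m) = j := by ext; simp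
    exact ⟨⟨(j:ℕ), h j hj⟩, by rw [hj']; exact hj, hj'⟩
  · rintro ⟨j', hj', rfl⟩
    exact hj'

lemma surWeight_snoc {m : ℕ} (w : Fin m → Fin N) (c : Fin N) :
    surWeight N d (m+1) (Fin.snoc (α := fun _ => Fin N) w c) =
      surWeight N d m w *
        ((1 + ((Finset.univ.filter (fun i : Fin m => w i = c)).card : ℝ) * ((d:ℝ)-1))
          / ((N:ℝ) + m * ((d:ℝ)-1))) := by
  unfold surWeight
  rw [Fin.prod_univ_castSucc]
  congr 1
  · apply Finset.prod_congr rfl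
    intro i _
    have h1 : Finset.univ.filter (fun j : Fin (m+1) =>
        j < Fin.castSucc i ∧ Fin.snoc (α := fun _ => Fin N) w c j = Fin.snoc (α := fun _ => Fin N) w c (Fin.castSucc i)) =
        (Finset.univ.filter (fun j : Fin m => j.castSucc < Fin.castSucc i ∧
          Fin.snoc (α := fun _ => Fin N) w c j.castSucc = Fin.snoc (α := fun _ => Fin N) w c (Fin.castSucc i))).image
            Fin.castSucc := by
      apply filter_eq_image_castSucc
      intro j hj
      have := hj.1
      have hi : (i : ℕ) < m := i.isLt
      simp only [Fin.lt_iff_val_lt_val, Fin.coe_castSucc] at this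
      omega
    rw [h1, Finset.card_image_of_injective _ (Fin.castSucc_injective m)]
    simp only [Fin.snoc_castSucc, Fin.castSucc_lt_castSucc_iff, Fin.coe_castSucc]
  · have h2 : Finset.univ.filter (fun j : Fin (m+1) =>
        j < Fin.last m ∧ Fin.snoc (α := fun _ => Fin N) w c j = Fin.snoc (α := fun _ => Fin N) w c (Fin.last m)) =
        (Finset.univ.filter (fun j : Fin m => j.castSucc < Fin.last m ∧
          Fin.snoc (α := fun _ => Fin N) w c j.castSucc = Fin.snoc (α := fun _ => Fin N) w c (Fin.last m))).image
            Fin.castSucc := by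
      apply filter_eq_image_castSucc
      intro j hj
      simpa [Fin.lt_iff_val_lt_val] using hj.1
    rw [h2, Finset.card_image_of_injective _ (Fin.castSucc_injective m)]
    simp only [Fin.snoc_castSucc, Fin.snoc_last, Fin.castSucc_lt_last, true_and, Fin.val_last]

section
variable {N d : ℕ}

def snocEquivFn (N m : ℕ) : ((Fin m → Fin N) × Fin N) ≃ (Fin (m+1) → Fin N) where
  toFun p := Fin.snoc p.1 p.2
  invFun f := (fun i => f i.castSucc, f (Fin.last m))
  left_inv p := by
    ext i
    · simp
    · simp
  right_inv f := by
    have := Fin.snoc_init_self f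
    unfold Fin.init at this
    exact this

lemma forall_snoc_ne {m : ℕ} (w : Fin m → Fin N) (c v : Fin N) :
    (∀ i : Fin (m+1), Fin.snoc (α := fun _ => Fin N) w c i ≠ v) ↔
      ((∀ i, w i ≠ v) ∧ c ≠ v) := by
  constructor
  · intro h
    refine ⟨fun i => ?_, ?_⟩
    · simpa using h i.castSucc
    · simpa using h (Fin.last m)
  · rintro ⟨h1, h2⟩ i
    induction i using Fin.lastCases with
    | last => simpa using h2
    | cast i => simpa using h1 i

end

lemma sum_avoid (hN : 0 < N) (hd : 1 ≤ d) (v : Fin N) : ∀ m : ℕ,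
    ∑ w ∈ (Finset.univ : Finset (Fin m → Fin N)).filter (fun w => ∀ i, w i ≠ v),
      surWeight N d m w
    = ∏ i ∈ Finset.range m, (((N:ℝ)-1) + i*((d:ℝ)-1)) / ((N:ℝ) + i*((d:ℝ)-1)) := by
  intro m
  induction m with
  | zero =>
    rw [Finset.filter_true_of_mem (fun w _ => fun i => i.elim0)]
    simp [surWeight]
  | succ m ih =>
    rw [Finset.prod_range_succ, ← ih]
    have hswap := Fintype.sum_equiv (snocEquivFn N m)
      (fun p : (Fin m → Fin N) × Fin N =>
        if (∀ i : Fin (m+1), Fin.snoc (α := fun _ => Fin N) p.1 p.2 i ≠ v)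
          then surWeight N d (m+1) (Fin.snoc p.1 p.2) else 0)
      (fun f => if (∀ i, f i ≠ v) then surWeight N d (m+1) f else 0)
      (fun p => rfl)
    rw [Finset.sum_filter, ← hswap, Fintype.sum_prod_type, Finset.sum_filter, Finset.sum_mul]
    apply Finset.sum_congr rfl
    intro w' _
    by_cases hw : ∀ i, w' i ≠ v
    · rw [if_pos hw]
      have h1 : ∀ c : Fin N, (∀ i, Fin.snoc (α := fun _ => Fin N) w' c i ≠ v) ↔ c ≠ v := by
        intro c; rw [forall_snoc_ne]; simp [hw]
      simp only [h1, surWeight_snoc]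
      rw [← Finset.sum_filter, ← Finset.mul_sum]
      congr 1
      rw [← Finset.sum_div]
      congr 1
      rw [Finset.sum_add_distrib, Finset.sum_const, ← Finset.sum_mul]
      have hcard : (Finset.univ.filter (fun c : Fin N => c ≠ v)).card = N - 1 := by
        rw [Finset.filter_ne', Finset.card_erase_of_mem (Finset.mem_univ v),
          Finset.card_univ, Fintype.card_fin]
      have h3 : ∑ c ∈ (Finset.univ : Finset (Fin N)),
          (Finset.univ.filter (fun i : Fin m => w' i = c)).card = m := by
        have h4 := Finset.card_eq_sum_card_fiberwise
          (f := w') (s := Finset.univ) (t := Finset.univ) (fun i _ => Finset.mem_univ _)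
        simpa using h4.symm
      have h2 : ∑ c ∈ Finset.univ.filter (fun c : Fin N => c ≠ v),
          ((Finset.univ.filter (fun i : Fin m => w' i = c)).card : ℝ) = m := by
        rw [Finset.filter_ne']
        rw [Finset.sum_erase _ (by
          have : Finset.univ.filter (fun i : Fin m => w' i = v) = ∅ := by
            apply Finset.filter_eq_empty_iff.2
            intro i _
            exact hw i
          simp [this])]
        rw [← Nat.cast_sum]
        exact_mod_cast congrArg (Nat.cast (R := ℝ)) h3
      rw [h2, hcard]
      have : ((N - 1 : ℕ) : ℝ) = (N : ℝ) - 1 := by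
        have : 1 ≤ N := hN
        push_cast [this]
        ring
      rw [nsmul_eq_mul, this]
      ring
    · rw [if_neg hw]
      have h1 : ∀ c : Fin N, ¬ (∀ i, Fin.snoc (α := fun _ => Fin N) w' c i ≠ v) := by
        intro c hcon
        exact hw (fun i => by simpa using hcon i.castSucc)
      simp [h1]

lemma prodP_tendsto (hN : 0 < N) (hd : 1 ≤ d) :
    Filter.Tendsto
      (fun m => ∏ i ∈ Finset.range m, (((N:ℝ)-1) + i*((d:ℝ)-1)) / ((N:ℝ) + i*((d:ℝ)-1)))
      Filter.atTop (nhds 0) := by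
  set e : ℝ := (d:ℝ) - 1 with he_def
  have he : 0 ≤ e := by
    have : (1:ℝ) ≤ d := by exact_mod_cast hd
    simp [he_def]; linarith
  have hN1 : (1:ℝ) ≤ N := by exact_mod_cast hN
  have hden : ∀ i : ℕ, (0:ℝ) < (N:ℝ) + i * e := by
    intro i; positivity
  have hfle : ∀ i : ℕ, ((N:ℝ)-1 + i*e) / ((N:ℝ) + i*e)
      ≤ Real.exp (-((1/((N:ℝ)+e)) * (1/(i+1)))) := by
    intro i
    have h1 : ((N:ℝ)-1 + i*e) / ((N:ℝ) + i*e) = 1 - 1/((N:ℝ)+i*e) := by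
      field_simp
      ring
    have h2 : (1:ℝ)/((N:ℝ)+e) * (1/(i+1)) ≤ 1/((N:ℝ)+i*e) := by
      rw [div_mul_div_comm, one_mul]
      apply one_div_le_one_div_of_le (hden i)
      have : (0:ℝ) ≤ i := by positivity
      nlinarith
    calc ((N:ℝ)-1 + i*e) / ((N:ℝ) + i*e) = 1 - 1/((N:ℝ)+i*e) := h1
      _ ≤ 1 - (1/((N:ℝ)+e)) * (1/(i+1)) := by linarith
      _ ≤ Real.exp (-((1/((N:ℝ)+e)) * (1/(i+1)))) := by
          have := Real.add_one_le_exp (-((1/((N:ℝ)+e)) * (1/(i+1))))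
          linarith
  have hf0 : ∀ i : ℕ, (0:ℝ) ≤ ((N:ℝ)-1 + i*e) / ((N:ℝ) + i*e) := by
    intro i
    apply div_nonneg _ (hden i).le
    have : (0:ℝ) ≤ i := by positivity
    nlinarith
  have hP0 : ∀ m, (0:ℝ) ≤ ∏ i ∈ Finset.range m, (((N:ℝ)-1) + i*e) / ((N:ℝ) + i*e) :=
    fun m => Finset.prod_nonneg (fun i _ => hf0 i)
  have hPle : ∀ m, (∏ i ∈ Finset.range m, (((N:ℝ)-1) + i*e) / ((N:ℝ) + i*e))
      ≤ Real.exp (-((1/((N:ℝ)+e)) * ∑ i ∈ Finset.range m, 1/((i:ℝ)+1))) := by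
    intro m
    calc (∏ i ∈ Finset.range m, (((N:ℝ)-1) + i*e) / ((N:ℝ) + i*e))
        ≤ ∏ i ∈ Finset.range m, Real.exp (-((1/((N:ℝ)+e)) * (1/(i+1)))) :=
          Finset.prod_le_prod (fun i _ => hf0 i) (fun i _ => hfle i)
      _ = Real.exp (∑ i ∈ Finset.range m, -((1/((N:ℝ)+e)) * (1/((i:ℝ)+1)))) :=
          (Real.exp_sum _ _).symm
      _ = Real.exp (-((1/((N:ℝ)+e)) * ∑ i ∈ Finset.range m, 1/((i:ℝ)+1))) := by
          congr 1
          rw [Finset.mul_sum, ← Finset.sum_neg_distrib]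
  have hH : Filter.Tendsto (fun m => ∑ i ∈ Finset.range m, 1/((i:ℝ)+1))
      Filter.atTop Filter.atTop := by
    simpa using Real.tendsto_sum_range_one_div_nat_succ_atTop
  have hc : (0:ℝ) < 1/((N:ℝ)+e) := by positivity
  have hexp : Filter.Tendsto
      (fun m => Real.exp (-((1/((N:ℝ)+e)) * ∑ i ∈ Finset.range m, 1/((i:ℝ)+1))))
      Filter.atTop (nhds 0) := by
    apply Real.tendsto_exp_atBot.comp
    exact Filter.tendsto_neg_atBot_iff.mpr (hH.const_mul_atTop hc)
  exact squeeze_zero hP0 hPle hexp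

/-! ### Record combinatorics -/

def recp {N : ℕ} (f : ℕ → Fin N) (j : ℕ) : Prop := ∀ k < j, f k ≠ f j

instance {N : ℕ} (f : ℕ → Fin N) : DecidablePred (recp f) := fun _ =>
  Nat.decidableBallLT _ _

lemma recp_zero {N : ℕ} (f : ℕ → Fin N) : recp f 0 := fun k hk => absurd hk (Nat.not_lt_zero k)

lemma recp_eq_val_pred {N : ℕ} (f : ℕ → Fin N) :
    (fun j => ∀ k < j, ((f k : ℕ)) ≠ (f j : ℕ)) = recp f := by
  funext j
  apply propext
  constructor
  · intro h k hk hfk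
    exact h k hk (by rw [hfk])
  · intro h k hk hfk
    exact h k hk (Fin.val_injective hfk)

lemma recp_injOn {N : ℕ} (f : ℕ → Fin N) {j j' : ℕ} (hj : recp f j') (h : j < j') :
    f j ≠ f j' := hj j h

/-- If `t` enumerates the records, then `Nat.nth` of the record predicate is `t`. -/
lemma nth_recp_eq {N : ℕ} (f : ℕ → Fin N) (t : Fin N → ℕ) (ht : StrictMono t)
    (hall : ∀ j, recp f j ↔ ∃ i, t i = j) (i : Fin N) :
    Nat.nth (recp f) (i : ℕ) = t i := by
  have hp : recp f (t i) := (hall (t i)).2 ⟨i, rfl⟩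
  have hc : Nat.count (recp f) (t i) = (i : ℕ) := by
    rw [Nat.count_eq_card_filter_range]
    have himg : (Finset.range (t i)).filter (recp f)
        = (Finset.univ.filter (fun i' : Fin N => i' < i)).image t := by
      ext j
      simp only [Finset.mem_filter, Finset.mem_range, Finset.mem_image, Finset.mem_univ, true_and]
      constructor
      · rintro ⟨hjlt, hj⟩
        obtain ⟨i', rfl⟩ := (hall j).1 hj
        exact ⟨i', ht.lt_iff_lt.1 hjlt, rfl⟩
      · rintro ⟨i', hi', rfl⟩
        exact ⟨ht hi', (hall _).2 ⟨i', rfl⟩⟩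
    rw [himg, Finset.card_image_of_injective _ ht.injective]
    rw [show (Finset.univ.filter (fun i' : Fin N => i' < i)) = Finset.Iio i from by
      ext; simp, Fin.card_Iio]
  have := Nat.nth_count hp
  rw [hc] at this
  exact this

/-- If every value is attained, the record set is finite with exactly `N` elements. -/
lemma recp_card {N : ℕ} (f : ℕ → Fin N) (hsurj : ∀ v, ∃ j, f j = v) :
    ∃ hf : (setOf (recp f)).Finite, hf.toFinset.card = N := by
  have hinj : Set.InjOn f (setOf (recp f)) := by
    intro j hj j' hj' hee
    by_contra hne
    rcases Nat.lt_or_ge j j' with h | h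
    · exact recp_injOn f hj' h hee
    · have h' : j' < j := by omega
      exact recp_injOn f hj h' hee.symm
  have hf : (setOf (recp f)).Finite := by
    have himage : (f '' setOf (recp f)).Finite := Set.toFinite _
    exact Set.Finite.of_finite_image himage hinj
  refine ⟨hf, ?_⟩
  have himg : hf.toFinset.image f = Finset.univ := by
    ext v
    simp only [Finset.mem_image, Set.Finite.mem_toFinset, Set.mem_setOf_eq, Finset.mem_univ,
      iff_true]
    obtain ⟨j, hj⟩ := hsurj v
    have hex : ∃ j, f j = v := ⟨j, hj⟩
    refine ⟨Nat.find hex, ?_, Nat.find_spec hex⟩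
    intro k hk hfk
    exact absurd (hfk.trans (Nat.find_spec hex)) (Nat.find_min hex hk)
  have := Finset.card_image_of_injOn (f := f) (s := hf.toFinset)
    (by intro a ha b hb; exact hinj (by simpa using ha) (by simpa using hb))
  rw [himg] at this
  simp only [Finset.card_univ, Fintype.card_fin] at this
  omega

/-- If every value is attained, `Nat.nth (recp f)` restricted to `Fin N` is a strictly
monotone enumeration of the records. -/
lemma recp_enum {N : ℕ} (f : ℕ → Fin N) (hsurj : ∀ v, ∃ j, f j = v) :
    StrictMono (fun i : Fin N => Nat.nth (recp f) (i : ℕ)) ∧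
      (∀ j, recp f j ↔ ∃ i : Fin N, Nat.nth (recp f) (i : ℕ) = j) := by
  obtain ⟨hf, hcard⟩ := recp_card f hsurj
  constructor
  · intro i i' hii
    exact Nat.nth_lt_nth_of_lt_card hf hii (lt_of_lt_of_eq i'.isLt hcard.symm)
  · intro j
    constructor
    · intro hj
      have hcnt : Nat.count (recp f) j < N := by
        have := Nat.count_lt_card hf hj
        exact lt_of_lt_of_eq this hcard
      exact ⟨⟨Nat.count (recp f) j, hcnt⟩, Nat.nth_count hj⟩
    · rintro ⟨i, rfl⟩
      exact Nat.nth_mem_of_lt_card hf (lt_of_lt_of_eq i.isLt hcard.symm)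

/-- If the first-appearance sequence spells out a permutation, every value is attained. -/
lemma surj_of_perm_spec {N : ℕ} (f : ℕ → Fin N) (π : Equiv.Perm (Fin N)) (hN : 0 < N)
    (hA : ∀ i : Fin N, f (Nat.nth (recp f) (i : ℕ)) = π i) :
    ∀ v, ∃ j, f j = v := by
  by_contra hcon
  push_neg at hcon
  obtain ⟨v, hv⟩ := hcon
  -- the record set is finite with at most N - 1 elements
  have hinj : Set.InjOn f (setOf (recp f)) := by
    intro j hj j' hj' hee
    by_contra hne
    rcases Nat.lt_or_ge j j' with h | h
    · exact recp_injOn f hj' h hee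
    · exact recp_injOn f hj (by omega) hee.symm
  have hf : (setOf (recp f)).Finite :=
    Set.Finite.of_finite_image (Set.toFinite _) hinj
  have hcard : hf.toFinset.card ≤ N - 1 := by
    have hsub : hf.toFinset.image f ⊆ Finset.univ.erase v := by
      intro c hc
      simp only [Finset.mem_image, Set.Finite.mem_toFinset] at hc
      obtain ⟨j, _, rfl⟩ := hc
      exact Finset.mem_erase.2 ⟨hv j, Finset.mem_univ _⟩
    have h1 := Finset.card_le_card hsub
    rw [Finset.card_erase_of_mem (Finset.mem_univ v), Finset.card_univ, Fintype.card_fin] at h1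
    have h2 := Finset.card_image_of_injOn (f := f) (s := hf.toFinset)
      (by intro a ha b hb; exact hinj (by simpa using ha) (by simpa using hb))
    omega
  have hlast : Nat.nth (recp f) (N - 1) = 0 :=
    Nat.nth_eq_zero.2 (Or.inr ⟨hf, hcard⟩)
  have hzero : Nat.nth (recp f) 0 = 0 := Nat.nth_zero_of_zero (recp_zero f)
  have h1 := hA ⟨N - 1, by omega⟩
  have h2 := hA ⟨0, hN⟩
  simp only [hlast, hzero] at h1 h2
  have : π ⟨N - 1, by omega⟩ = π ⟨0, hN⟩ := by rw [← h1, ← h2]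
  have hN1 : N = 1 := by
    have := π.injective this
    simp only [Fin.mk.injEq] at this
    omega
  subst hN1
  exact hv 0 (Subsingleton.elim _ _)

/-! ### Events -/

section Events

variable {N : ℕ} {Ω : Type*} [MeasurableSpace Ω]

def cylEv (Y : ℕ → Ω → Fin N) (m : ℕ) (w : Fin m → Fin N) : Set Ω :=
  {ω | ∀ i : Fin m, Y i ω = w i}

lemma cylEv_measurable (Y : ℕ → Ω → Fin N) (hmeas : ∀ i, Measurable (Y i)) (m : ℕ)
    (w : Fin m → Fin N) : MeasurableSet (cylEv Y m w) := by
  have : cylEv Y m w = ⋂ i : Fin m, (Y i) ⁻¹' {w i} := by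
    ext ω; simp [cylEv, Set.mem_iInter]
  rw [this]
  exact MeasurableSet.iInter (fun i => (hmeas i) (measurableSet_singleton _))

lemma cylEv_disjoint (Y : ℕ → Ω → Fin N) (m : ℕ) {w w' : Fin m → Fin N} (h : w ≠ w') :
    Disjoint (cylEv Y m w) (cylEv Y m w') := by
  rw [Set.disjoint_left]
  intro ω hw hw'
  exact h (funext fun i => (hw i).symm.trans (hw' i))

def DSet (Y : ℕ → Ω → Fin N) (π : Equiv.Perm (Fin N)) (t : Fin N → ℕ) : Set Ω :=
  {ω | (∀ i : Fin N, Y (t i) ω = π i) ∧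
    ∀ j, recp (fun k => Y k ω) j ↔ ∃ i, t i = j}

/-- The finite set of words of length `M+1` compatible with first appearances `π` at
record times `t`. -/
def WFin (N : ℕ) (π : Equiv.Perm (Fin N)) (t : Fin N → ℕ) :
    Finset (Fin (Finset.univ.sup t + 1) → Fin N) :=
  Finset.univ.filter (fun w =>
    (∀ i : Fin N, w ⟨t i, Nat.lt_succ_of_le (Finset.le_sup (Finset.mem_univ i))⟩ = π i) ∧
    ∀ j : Fin (Finset.univ.sup t + 1), (∀ k < j, w k ≠ w j) ↔ ∃ i : Fin N, t i = (j : ℕ))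

lemma recp_iff_fin {N : ℕ} {f : ℕ → Fin N} {m : ℕ} (j : Fin m) :
    recp f (j : ℕ) ↔ ∀ k : Fin m, k < j → f (k : ℕ) ≠ f (j : ℕ) := by
  constructor
  · intro h k hk
    exact h (k : ℕ) hk
  · intro h k hk
    exact h ⟨k, lt_trans hk j.isLt⟩ hk

lemma DSet_eq_biUnion (Y : ℕ → Ω → Fin N) (π : Equiv.Perm (Fin N)) (t : Fin N → ℕ) :
    DSet Y π t = ⋃ w ∈ WFin N π t, cylEv Y (Finset.univ.sup t + 1) w := by
  set M := Finset.univ.sup t with hM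
  have htM : ∀ i, t i ≤ M := fun i => Finset.le_sup (Finset.mem_univ i)
  ext ω
  simp only [Set.mem_iUnion, exists_prop]
  constructor
  · rintro ⟨h1, h2⟩
    refine ⟨fun j => Y j ω, ?_, fun i => rfl⟩
    rw [WFin, Finset.mem_filter]
    refine ⟨Finset.mem_univ _, fun i => h1 i, fun j => ?_⟩
    rw [show (∀ k < j, Y (k : ℕ) ω ≠ Y (j : ℕ) ω) ↔ recp (fun k => Y k ω) (j : ℕ) from
      (recp_iff_fin (f := fun k => Y k ω) j).symm]
    exact h2 (j : ℕ)
  · rintro ⟨w, hw, hcyl⟩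
    rw [WFin, Finset.mem_filter] at hw
    obtain ⟨-, hwπ, hwrec⟩ := hw
    have hY : ∀ j : Fin (M + 1), Y (j : ℕ) ω = w j := fun j => hcyl j
    have h1 : ∀ i : Fin N, Y (t i) ω = π i := by
      intro i
      have h := hY ⟨t i, Nat.lt_succ_of_le (htM i)⟩
      rw [h]
      exact hwπ i
    refine ⟨h1, fun j => ?_⟩
    rcases Nat.lt_or_ge j (M + 1) with hj | hj
    · have key := hwrec ⟨j, hj⟩
      rw [recp_iff_fin (f := fun k => Y k ω) (⟨j, hj⟩ : Fin (M + 1))]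
      have hYj : Y j ω = w ⟨j, hj⟩ := hY ⟨j, hj⟩
      refine Iff.trans ?_ key
      constructor
      · intro h k hk
        have h2 : Y (k : ℕ) ω ≠ Y j ω := h k hk
        rw [hY k, hYj] at h2
        exact h2
      · intro h k hk
        have h2 : w k ≠ w ⟨j, hj⟩ := h k hk
        rw [← hY k, ← hYj] at h2
        exact h2
    · constructor
      · intro hrec
        exfalso
        set i₀ := π.symm (Y j ω) with hi₀
        have hval : Y (t i₀) ω = Y j ω := by
          rw [h1 i₀, hi₀, Equiv.apply_symm_apply]
        exact hrec (t i₀) (lt_of_le_of_lt (htM i₀) hj) hval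
      · rintro ⟨i, rfl⟩
        exact absurd (htM i) (by omega)

end Events

section Measure

variable {N d : ℕ} {Ω : Type*} [MeasurableSpace Ω] {μ : Measure Ω} {Y : ℕ → Ω → Fin N}

lemma DSet_measurable (hmeas : ∀ i, Measurable (Y i)) (π : Equiv.Perm (Fin N))
    (t : Fin N → ℕ) : MeasurableSet (DSet Y π t) := by
  rw [DSet_eq_biUnion]
  exact (WFin N π t).measurableSet_biUnion (fun w _ => cylEv_measurable Y hmeas _ w)

lemma DSet_measure (hmeas : ∀ i, Measurable (Y i))
    (hlaw : ∀ (m : ℕ) (w : Fin m → Fin N),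
      μ {ω | ∀ i : Fin m, Y i ω = w i} = ENNReal.ofReal (surWeight N d m w))
    (π : Equiv.Perm (Fin N)) (t : Fin N → ℕ) :
    μ (DSet Y π t) = ∑ w ∈ WFin N π t,
      ENNReal.ofReal (surWeight N d (Finset.univ.sup t + 1) w) := by
  rw [DSet_eq_biUnion]
  rw [measure_biUnion_finset ?hd (fun w _ => cylEv_measurable Y hmeas _ w)]
  · exact Finset.sum_congr rfl (fun w _ => hlaw _ w)
  case hd =>
    intro w hw w' hw' hne
    exact cylEv_disjoint Y _ hne

lemma DSet_measure_relabel (hmeas : ∀ i, Measurable (Y i))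
    (hlaw : ∀ (m : ℕ) (w : Fin m → Fin N),
      μ {ω | ∀ i : Fin m, Y i ω = w i} = ENNReal.ofReal (surWeight N d m w))
    (σ π : Equiv.Perm (Fin N)) (t : Fin N → ℕ) :
    μ (DSet Y (σ * π) t) = μ (DSet Y π t) := by
  rw [DSet_measure hmeas hlaw, DSet_measure hmeas hlaw]
  apply Finset.sum_nbij' (fun w => fun i => σ.symm (w i)) (fun w => fun i => σ (w i))
  · intro w hw
    rw [WFin, Finset.mem_filter] at hw ⊢
    obtain ⟨-, h1, h2⟩ := hw
    refine ⟨Finset.mem_univ _, fun i => ?_, fun j => ?_⟩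
    · beta_reduce
      rw [h1 i]
      simp [Equiv.Perm.mul_apply]
    · rw [← h2 j]
      constructor
      · intro h k hk hne
        exact h k hk (congrArg _ hne)
      · intro h k hk hne
        exact h k hk (σ.symm.injective hne)
  · intro w hw
    rw [WFin, Finset.mem_filter] at hw ⊢
    obtain ⟨-, h1, h2⟩ := hw
    refine ⟨Finset.mem_univ _, fun i => ?_, fun j => ?_⟩
    · beta_reduce
      rw [h1 i]
      simp [Equiv.Perm.mul_apply]
    · rw [← h2 j]
      constructor
      · intro h k hk hne
        exact h k hk (congrArg _ hne)
      · intro h k hk hne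
        exact h k hk (σ.injective hne)
  · intro w _
    funext i
    simp
  · intro w _
    funext i
    simp
  · intro w _
    congr 1
    exact (surWeight_relabel σ.symm w).symm

end Measure


section ASet

variable {N : ℕ} {Ω : Type*} [MeasurableSpace Ω] (Y : ℕ → Ω → Fin N)

def ASet (π : Equiv.Perm (Fin N)) : Set Ω :=
  {ω | ∀ i : Fin N, firstDistinct (fun j => (Y j ω : ℕ)) (i : ℕ) = (π i : ℕ)}

lemma firstDistinct_eq {f : ℕ → Fin N} (i : ℕ) :
    firstDistinct (fun j => (f j : ℕ)) i = (f (Nat.nth (recp f) i) : ℕ) := by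
  unfold firstDistinct
  rw [recp_eq_val_pred f]

lemma mem_ASet_iff (π : Equiv.Perm (Fin N)) (ω : Ω) :
    ω ∈ ASet Y π ↔ ∀ i : Fin N, (fun k => Y k ω) (Nat.nth (recp (fun k => Y k ω)) (i : ℕ)) = π i := by
  unfold ASet
  simp only [Set.mem_setOf_eq]
  constructor
  · intro h i
    have := h i
    rw [firstDistinct_eq (f := fun k => Y k ω)] at this
    exact Fin.val_injective this
  · intro h i
    rw [firstDistinct_eq (f := fun k => Y k ω), h i]

lemma ASet_eq_iUnion (hN : 0 < N) (π : Equiv.Perm (Fin N)) :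
    ASet Y π = ⋃ t : {t : Fin N → ℕ // StrictMono t}, DSet Y π t.1 := by
  ext ω
  rw [Set.mem_iUnion]
  set f : ℕ → Fin N := fun k => Y k ω with hf
  constructor
  · intro hA
    have hA' := (mem_ASet_iff Y π ω).1 hA
    have hsurj : ∀ v, ∃ j, f j = v := surj_of_perm_spec f π hN hA'
    obtain ⟨ht, hall⟩ := recp_enum f hsurj
    refine ⟨⟨fun i => Nat.nth (recp f) (i : ℕ), ht⟩, fun i => hA' i, fun j => ?_⟩
    exact hall j
  · rintro ⟨⟨t, ht⟩, h1, h2⟩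
    rw [mem_ASet_iff]
    intro i
    rw [nth_recp_eq f t ht h2 i]
    exact h1 i

lemma ASet_measurable (hN : 0 < N) (hmeas : ∀ i, Measurable (Y i)) (π : Equiv.Perm (Fin N)) :
    MeasurableSet (ASet Y π) := by
  rw [ASet_eq_iUnion Y hN π]
  exact MeasurableSet.iUnion (fun t => DSet_measurable hmeas π t.1)

lemma ASet_disjoint (π π' : Equiv.Perm (Fin N)) (h : π ≠ π') :
    Disjoint (ASet Y π) (ASet Y π') := by
  rw [Set.disjoint_left]
  intro ω h1 h2
  apply h
  apply Equiv.ext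
  intro i
  exact Fin.val_injective ((h1 i).symm.trans (h2 i))

lemma DSet_pairwise_disjoint (π : Equiv.Perm (Fin N)) :
    Pairwise (Function.onFun Disjoint
      (fun t : {t : Fin N → ℕ // StrictMono t} => DSet Y π t.1)) := by
  intro t t' hne
  rw [Function.onFun, Set.disjoint_left]
  intro ω h1 h2
  apply hne
  have hr : Set.range t.1 = Set.range t'.1 := by
    ext j
    simp only [Set.mem_range]
    rw [← h1.2 j, ← h2.2 j]
  letI : WellFoundedLT (Fin N) := Finite.to_wellFoundedLT
  exact Subtype.ext ((StrictMono.range_inj t.2 t'.2).1 hr)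

/-- Every `ω` where all labels appear lies in some `ASet`. -/
lemma mem_iUnion_ASet (ω : Ω) (hsurj : ∀ v, ∃ j, Y j ω = v) :
    ∃ π : Equiv.Perm (Fin N), ω ∈ ASet Y π := by
  set f : ℕ → Fin N := fun k => Y k ω with hf
  obtain ⟨ht, hall⟩ := recp_enum f hsurj
  have hinj : Function.Injective (fun i : Fin N => f (Nat.nth (recp f) (i : ℕ))) := by
    intro i i' hee
    by_contra hne
    have hnth : Nat.nth (recp f) (i : ℕ) ≠ Nat.nth (recp f) (i' : ℕ) := by
      intro hcon
      exact hne (ht.injective hcon)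
    have hrec : recp f (Nat.nth (recp f) (i : ℕ)) := (hall _).2 ⟨i, rfl⟩
    have hrec' : recp f (Nat.nth (recp f) (i' : ℕ)) := (hall _).2 ⟨i', rfl⟩
    rcases Nat.lt_or_ge (Nat.nth (recp f) (i : ℕ)) (Nat.nth (recp f) (i' : ℕ)) with h | h
    · exact recp_injOn f hrec' h hee
    · exact recp_injOn f hrec (by omega) hee.symm
  have hbij := Finite.injective_iff_bijective.1 hinj
  refine ⟨Equiv.ofBijective _ hbij, ?_⟩
  rw [mem_ASet_iff]
  intro i
  rfl

end ASet

section Final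

variable {N d : ℕ} {Ω : Type*} [MeasurableSpace Ω] {μ : Measure Ω} {Y : ℕ → Ω → Fin N}

lemma avoid_measure_zero (hN : 0 < N) (hd : 1 ≤ d) (hmeas : ∀ i, Measurable (Y i))
    (hlaw : ∀ (m : ℕ) (w : Fin m → Fin N),
      μ {ω | ∀ i : Fin m, Y i ω = w i} = ENNReal.ofReal (surWeight N d m w))
    (v : Fin N) : μ {ω | ∀ j : ℕ, Y j ω ≠ v} = 0 := by
  have hm : ∀ m : ℕ, μ {ω | ∀ j : Fin m, Y (j : ℕ) ω ≠ v}
      = ENNReal.ofReal (∏ i ∈ Finset.range m,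
          (((N:ℝ)-1) + i*((d:ℝ)-1)) / ((N:ℝ) + i*((d:ℝ)-1))) := by
    intro m
    have hEq : {ω | ∀ j : Fin m, Y (j : ℕ) ω ≠ v} =
        ⋃ w ∈ (Finset.univ.filter fun w : Fin m → Fin N => ∀ i, w i ≠ v), cylEv Y m w := by
      ext ω
      simp only [Set.mem_setOf_eq, Set.mem_iUnion, exists_prop, Finset.mem_filter,
        Finset.mem_univ, true_and]
      constructor
      · intro h
        exact ⟨fun j => Y j ω, fun i => h i, fun i => rfl⟩
      · rintro ⟨w, hw, hcyl⟩ j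
        rw [hcyl j]
        exact hw j
    rw [hEq, measure_biUnion_finset
      (fun w _ w' _ hne => cylEv_disjoint Y m hne)
      (fun w _ => cylEv_measurable Y hmeas m w),
      ← sum_avoid hN hd v m,
      ENNReal.ofReal_sum_of_nonneg (fun w _ => surWeight_nonneg hN hd w)]
    exact Finset.sum_congr rfl (fun w _ => hlaw m w)
  have hle : ∀ m : ℕ, μ {ω | ∀ j : ℕ, Y j ω ≠ v}
      ≤ ENNReal.ofReal (∏ i ∈ Finset.range m,
          (((N:ℝ)-1) + i*((d:ℝ)-1)) / ((N:ℝ) + i*((d:ℝ)-1))) := by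
    intro m
    rw [← hm m]
    exact measure_mono (fun ω h j => h (j : ℕ))
  have htend := ENNReal.tendsto_ofReal (prodP_tendsto hN hd)
  rw [ENNReal.ofReal_zero] at htend
  have := ge_of_tendsto' htend hle
  simpa using this

lemma ASet_measure_relabel (hN : 0 < N) (hmeas : ∀ i, Measurable (Y i))
    (hlaw : ∀ (m : ℕ) (w : Fin m → Fin N),
      μ {ω | ∀ i : Fin m, Y i ω = w i} = ENNReal.ofReal (surWeight N d m w))
    (σ π : Equiv.Perm (Fin N)) :
    μ (ASet Y (σ * π)) = μ (ASet Y π) := by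
  rw [ASet_eq_iUnion Y hN, ASet_eq_iUnion Y hN,
    measure_iUnion (DSet_pairwise_disjoint Y (σ * π)) (fun t => DSet_measurable hmeas _ t.1),
    measure_iUnion (DSet_pairwise_disjoint Y π) (fun t => DSet_measurable hmeas _ t.1)]
  exact tsum_congr (fun t => DSet_measure_relabel hmeas hlaw σ π t.1)

end Final

/-- In surreplacement sampling with parameter `d ≥ 1` from `N` initially distinct labels,
the sequence of labels in order of first appearance is uniformly distributed over all
permutations of the labels. -/
theorem surreplacement_first_appearance_uniform (N d : ℕ) (hN : 0 < N) (hd : 1 ≤ d)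
    {Ω : Type*} [MeasurableSpace Ω] (μ : Measure Ω) [IsProbabilityMeasure μ]
    (Y : ℕ → Ω → Fin N) (hmeas : ∀ i, Measurable (Y i))
    (hlaw : ∀ (m : ℕ) (w : Fin m → Fin N),
      μ {ω | ∀ i : Fin m, Y i ω = w i} = ENNReal.ofReal (surWeight N d m w)) :
    ∀ π : Equiv.Perm (Fin N),
      μ {ω | ∀ i : Fin N, firstDistinct (fun j => (Y j ω : ℕ)) (i : ℕ) = (π i : ℕ)}
        = (N.factorial : ℝ≥0∞)⁻¹ := by
  intro π
  have hAset : {ω | ∀ i : Fin N, firstDistinct (fun j => (Y j ω : ℕ)) (i : ℕ) = (π i : ℕ)}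
      = ASet Y π := rfl
  rw [hAset]
  set S := {ω | ∀ v : Fin N, ∃ j : ℕ, Y j ω = v} with hSdef
  have hScomp : μ Sᶜ = 0 := by
    have hsub : Sᶜ ⊆ ⋃ v : Fin N, {ω | ∀ j : ℕ, Y j ω ≠ v} := by
      intro ω hω
      simp only [hSdef, Set.mem_compl_iff, Set.mem_setOf_eq, not_forall, not_exists] at hω
      obtain ⟨v, hv⟩ := hω
      exact Set.mem_iUnion.2 ⟨v, hv⟩
    exact measure_mono_null hsub
      (measure_iUnion_null fun v => avoid_measure_zero hN hd hmeas hlaw v)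
  have hone : μ (⋃ π' : Equiv.Perm (Fin N), ASet Y π') = 1 := by
    apply le_antisymm
    · exact (measure_mono (Set.subset_univ _)).trans_eq measure_univ
    · calc (1:ℝ≥0∞) = μ Set.univ := measure_univ.symm
        _ = μ (S ∪ Sᶜ) := by rw [Set.union_compl_self]
        _ ≤ μ S + μ Sᶜ := measure_union_le _ _
        _ = μ S := by rw [hScomp, add_zero]
        _ ≤ μ (⋃ π' : Equiv.Perm (Fin N), ASet Y π') := by
            apply measure_mono
            intro ω hω
            obtain ⟨π', h⟩ := mem_iUnion_ASet Y ω hω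
            exact Set.mem_iUnion.2 ⟨π', h⟩
  have hsum : ∑' π' : Equiv.Perm (Fin N), μ (ASet Y π') = 1 := by
    rw [← measure_iUnion
      (fun π₁ π₂ hne => ASet_disjoint Y π₁ π₂ hne)
      (fun π' => ASet_measurable Y hN hmeas π'), hone]
  have hconst : ∀ π' : Equiv.Perm (Fin N), μ (ASet Y π') = μ (ASet Y π) := by
    intro π'
    have h := ASet_measure_relabel hN hmeas hlaw (π' * π⁻¹) π
    rw [show π' * π⁻¹ * π = π' from by group] at h
    exact h
  rw [tsum_fintype] at hsum
  rw [Finset.sum_congr rfl (fun π' _ => hconst π'), Finset.sum_const, Finset.card_univ,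
    Fintype.card_perm, Fintype.card_fin] at hsum
  have hfac0 : (N.factorial : ℝ≥0∞) ≠ 0 := by
    exact_mod_cast Nat.factorial_ne_zero N
  have hfactop : (N.factorial : ℝ≥0∞) ≠ ⊤ := ENNReal.natCast_ne_top _
  calc μ (ASet Y π) = 1 * μ (ASet Y π) := (one_mul _).symm
    _ = ((N.factorial : ℝ≥0∞)⁻¹ * (N.factorial : ℝ≥0∞)) * μ (ASet Y π) := by
        rw [ENNReal.inv_mul_cancel hfac0 hfactop]
    _ = (N.factorial : ℝ≥0∞)⁻¹ * (N.factorial • μ (ASet Y π)) := by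
        rw [mul_assoc, nsmul_eq_mul]
    _ = (N.factorial : ℝ≥0∞)⁻¹ := by rw [hsum, mul_one]
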